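/- The concurrence of a Bell diagonal state with decreasingly ordered eigenvalues λ₁ ≥ λ₂ ≥ λ₃ ≥ λ₄ equals max[0, 2λ₁ − 1]. -/

import Mathlib

open Matrix Kronecker BigOperators ComplexOrder

noncomputable section

/-- The Pauli matrices σ₁ (x), σ₂ (y), σ₃ (z), indexed by `Fin 3`. -/
def pauli : Fin 3 → Matrix (Fin 2) (Fin 2) ℂ
  | 0 => !![0, 1; 1, 0]
  | 1 => !![0, -Complex.I; Complex.I, 0]
  | 2 => !![1, 0; 0, -1]

/-- A unit vector in ℝ³. -/
def unitVec (v : Fin 3 → ℝ) : Prop := ∑ i, v i ^ 2 = 1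

/-- The CHSH Bell operator associated to measurement directions a, b, c, d. -/
def bellOp (a b c d : Fin 3 → ℝ) : Matrix (Fin 2 × Fin 2) (Fin 2 × Fin 2) ℂ :=
  (1 / 2 : ℂ) • ∑ i, ∑ j,
    ((a i * (c j + d j) + b i * (c j - d j) : ℝ) : ℂ) • (pauli i ⊗ₖ pauli j)

/-- The set of CHSH expectation values of a two-qubit state. -/
def betaSet (ρ : Matrix (Fin 2 × Fin 2) (Fin 2 × Fin 2) ℂ) : Set ℝ :=
  {t : ℝ | ∃ a b c d : Fin 3 → ℝ, unitVec a ∧ unitVec b ∧ unitVec c ∧ unitVec d ∧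
    t = (Matrix.trace (ρ * bellOp a b c d)).re}

/-- The correlation matrix R_{kl} = tr(ρ σ_k ⊗ σ_l). -/
def corr (ρ : Matrix (Fin 2 × Fin 2) (Fin 2 × Fin 2) ℂ) : Matrix (Fin 3) (Fin 3) ℝ :=
  Matrix.of fun k l => (Matrix.trace (ρ * (pauli k ⊗ₖ pauli l))).re

/-- The four Bell states. -/
def bell : Fin 4 → (Fin 2 × Fin 2) → ℂ
  | 0 => fun p => if p = (0, 0) then (Real.sqrt 2 : ℂ)⁻¹ else if p = (1, 1) then (Real.sqrt 2 : ℂ)⁻¹ else 0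
  | 1 => fun p => if p = (0, 0) then (Real.sqrt 2 : ℂ)⁻¹ else if p = (1, 1) then -(Real.sqrt 2 : ℂ)⁻¹ else 0
  | 2 => fun p => if p = (0, 1) then (Real.sqrt 2 : ℂ)⁻¹ else if p = (1, 0) then (Real.sqrt 2 : ℂ)⁻¹ else 0
  | 3 => fun p => if p = (0, 1) then (Real.sqrt 2 : ℂ)⁻¹ else if p = (1, 0) then -(Real.sqrt 2 : ℂ)⁻¹ else 0

/-- Projector onto the i-th Bell state. -/
def bellProj (i : Fin 4) : Matrix (Fin 2 × Fin 2) (Fin 2 × Fin 2) ℂ :=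
  Matrix.vecMulVec (bell i) (star (bell i))

section helpers
variable {n : Type*} [Fintype n] [DecidableEq n]

lemma lem_outer_mul (u v w x : n → ℂ) :
    vecMulVec u v * vecMulVec w x = (v ⬝ᵥ w) • vecMulVec u x := by
  ext i j
  simp only [Matrix.mul_apply, vecMulVec_apply, Matrix.smul_apply, smul_eq_mul, dotProduct,
    Finset.sum_mul]
  exact Finset.sum_congr rfl fun k _ => by ring

lemma lem_mul_outer (A : Matrix n n ℂ) (u v : n → ℂ) :
    A * vecMulVec u v = vecMulVec (A *ᵥ u) v := by
  ext i j
  simp only [Matrix.mul_apply, vecMulVec_apply, mulVec, dotProduct, Finset.sum_mul]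
  exact Finset.sum_congr rfl fun k _ => by ring

lemma lem_outer_mul_mat (A : Matrix n n ℂ) (u v : n → ℂ) :
    vecMulVec u v * A = vecMulVec u (v ᵥ* A) := by
  ext i j
  simp only [Matrix.mul_apply, vecMulVec_apply, vecMul, dotProduct, Finset.mul_sum]
  exact Finset.sum_congr rfl fun k _ => by ring

end helpers

lemma star_bell (i : Fin 4) : star (bell i) = bell i := by
  funext p
  fin_cases i <;>
    simp [bell, apply_ite (star : ℂ → ℂ), ← Complex.ofReal_inv]

def eps : Fin 4 → ℂ := ![-1, 1, 1, -1]

lemma Ysymm : (pauli 1 ⊗ₖ pauli 1)ᵀ = pauli 1 ⊗ₖ pauli 1 := by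
  ext ⟨i, j⟩ ⟨k, l⟩
  fin_cases i <;> fin_cases j <;> fin_cases k <;> fin_cases l <;>
    simp [pauli, Matrix.transpose_apply]

lemma Y_mulVec_bell (i : Fin 4) :
    (pauli 1 ⊗ₖ pauli 1) *ᵥ bell i = eps i • bell i := by
  funext ⟨p, q⟩
  fin_cases i <;> fin_cases p <;> fin_cases q <;>
    · simp only [mulVec, dotProduct, Fintype.sum_prod_type, Fin.sum_univ_two,
        kroneckerMap_apply, pauli, bell, eps, Pi.smul_apply, smul_eq_mul,
        Matrix.cons_val', Matrix.cons_val_zero, Matrix.cons_val_one, Matrix.head_cons,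
        Matrix.head_fin_const, Matrix.empty_val', Matrix.cons_val_fin_one, Prod.mk.injEq]
      norm_num
      try ring_nf
      try simp [Complex.I_sq]
      try ring

lemma bell_vecMul_Y (i : Fin 4) :
    bell i ᵥ* (pauli 1 ⊗ₖ pauli 1) = eps i • bell i := by
  conv_lhs => rw [← Ysymm, Matrix.vecMul_transpose]
  exact Y_mulVec_bell i

lemma eps_sq (i : Fin 4) : eps i * eps i = 1 := by
  fin_cases i <;> norm_num [eps]

lemma YPY (i : Fin 4) :
    (pauli 1 ⊗ₖ pauli 1) * bellProj i * (pauli 1 ⊗ₖ pauli 1) = bellProj i := by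
  rw [bellProj, lem_mul_outer, lem_outer_mul_mat, Y_mulVec_bell]
  have h : star (bell i) ᵥ* (pauli 1 ⊗ₖ pauli 1) = eps i • star (bell i) := by
    conv_lhs => rw [star_bell i]
    rw [bell_vecMul_Y]
    conv_rhs => rw [star_bell i]
  rw [h]
  ext p q
  simp only [vecMulVec_apply, Pi.smul_apply, smul_eq_mul, bellProj]
  ring_nf
  rw [show eps i ^ 2 = 1 from by rw [sq, eps_sq], one_mul]

lemma bell_dot (i j : Fin 4) : star (bell i) ⬝ᵥ bell j = if i = j then 1 else 0 := by
  have h2 : ((Real.sqrt 2 : ℂ))⁻¹ * ((Real.sqrt 2 : ℂ))⁻¹ = (2:ℂ)⁻¹ := by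
    rw [← mul_inv, ← Complex.ofReal_mul, Real.mul_self_sqrt (by norm_num : (0:ℝ) ≤ 2)]
    norm_num
  rw [star_bell]
  fin_cases i <;> fin_cases j <;>
    · simp only [dotProduct, Fintype.sum_prod_type, Fin.sum_univ_two, bell, Prod.mk.injEq]
      norm_num [h2]
      try (ring_nf; norm_num [h2]; try ring)
      try norm_num [Fin.ext_iff]

lemma PP (i j : Fin 4) : bellProj i * bellProj j = if i = j then bellProj i else 0 := by
  rw [bellProj, bellProj, lem_outer_mul, bell_dot]
  split
  · subst_vars; simp [bellProj]
  · simp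

lemma projT (i : Fin 4) : (bellProj i)ᵀ = bellProj i := by
  ext p q
  simp only [Matrix.transpose_apply, bellProj, vecMulVec_apply, Pi.star_apply]
  have hp := congrFun (star_bell i) p
  have hq := congrFun (star_bell i) q
  simp only [Pi.star_apply] at hp hq
  rw [hp, hq]
  ring

def rhoMat (a b c d : ℝ) : Matrix (Fin 2 × Fin 2) (Fin 2 × Fin 2) ℂ :=
  fun p q =>
    match p.1.val, p.2.val, q.1.val, q.2.val with
    | 0,0, 0,0 => ((a+b)/2 : ℝ)
    | 0,0, 1,1 => ((a-b)/2 : ℝ)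
    | 1,1, 0,0 => ((a-b)/2 : ℝ)
    | 1,1, 1,1 => ((a+b)/2 : ℝ)
    | 0,1, 0,1 => ((c+d)/2 : ℝ)
    | 0,1, 1,0 => ((c-d)/2 : ℝ)
    | 1,0, 0,1 => ((c-d)/2 : ℝ)
    | 1,0, 1,0 => ((c+d)/2 : ℝ)
    | _,_, _,_ => 0

lemma rho_eq (lam : Fin 4 → ℝ) :
    (∑ i, (lam i : ℂ) • bellProj i) = rhoMat (lam 0) (lam 1) (lam 2) (lam 3) := by
  have h2 : ((Real.sqrt 2 : ℂ))⁻¹ * ((Real.sqrt 2 : ℂ))⁻¹ = (2:ℂ)⁻¹ := by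
    rw [← mul_inv, ← Complex.ofReal_mul, Real.mul_self_sqrt (by norm_num : (0:ℝ) ≤ 2)]
    norm_num
  ext ⟨i, j⟩ ⟨k, l⟩
  fin_cases i <;> fin_cases j <;> fin_cases k <;> fin_cases l <;>
    · simp only [Fin.sum_univ_four, bellProj, bell, Matrix.vecMulVec_apply, Matrix.sum_apply,
        Matrix.smul_apply, Pi.star_apply, rhoMat, Prod.mk.injEq, star_inv₀, Complex.star_def,
        Complex.conj_ofReal, star_neg]
      norm_num [h2]
      try (push_cast; ring)
      try (ring_nf; norm_num [h2]; push_cast; ring)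

def M4 (a b c d : ℝ) : Matrix (Fin 4) (Fin 4) ℂ :=
  !![((a+b)/2 : ℝ), 0, 0, ((a-b)/2 : ℝ);
     0, ((c+d)/2 : ℝ), ((c-d)/2 : ℝ), 0;
     0, ((c-d)/2 : ℝ), ((c+d)/2 : ℝ), 0;
     ((a-b)/2 : ℝ), 0, 0, ((a+b)/2 : ℝ)]

lemma reindex_rhoMat (a b c d : ℝ) :
    Matrix.reindex finProdFinEquiv finProdFinEquiv (rhoMat a b c d) = M4 a b c d := by
  ext i j
  fin_cases i <;> fin_cases j <;> rfl

def A2 (x y : ℝ) : Matrix (Fin 2) (Fin 2) ℂ :=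
  !![(((x+y)/2 : ℝ) : ℂ), (((x-y)/2 : ℝ) : ℂ); (((x-y)/2 : ℝ) : ℂ), (((x+y)/2 : ℝ) : ℂ)]

open Polynomial in
lemma charpoly_A2 (x y : ℝ) :
    (A2 x y).charpoly = (X - C (x:ℂ)) * (X - C (y:ℂ)) := by
  have hcm : charmatrix (A2 x y) =
      !![X - C (((x+y)/2 : ℝ) : ℂ), - C (((x-y)/2 : ℝ) : ℂ);
         - C (((x-y)/2 : ℝ) : ℂ), X - C (((x+y)/2 : ℝ) : ℂ)] := by
    ext i j
    fin_cases i <;> fin_cases j <;>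
      simp [charmatrix_apply_eq, charmatrix_apply_ne, A2]
  rw [Matrix.charpoly, hcm, Matrix.det_fin_two_of]
  apply Polynomial.funext
  intro z
  simp only [eval_mul, eval_sub, eval_neg, eval_X, eval_C]
  push_cast
  ring

def eSum : Fin 2 ⊕ Fin 2 ≃ Fin 4 where
  toFun x := Sum.elim ![0, 3] ![1, 2] x
  invFun i := ![Sum.inl 0, Sum.inr 0, Sum.inr 1, Sum.inl 1] i
  left_inv := by decide
  right_inv := by decide

open Polynomial in
lemma charpoly_M4 (a b c d : ℝ) :
    (M4 a b c d).charpoly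
      = (X - C (a:ℂ)) * (X - C (b:ℂ)) * (X - C (c:ℂ)) * (X - C (d:ℂ)) := by
  have hblock : Matrix.reindex eSum eSum (Matrix.fromBlocks (A2 a b) 0 0 (A2 c d)) = M4 a b c d := by
    ext i j
    fin_cases i <;> fin_cases j <;> rfl
  rw [← hblock, Matrix.charpoly_reindex, Matrix.charpoly_fromBlocks_zero₁₂,
    charpoly_A2, charpoly_A2]
  ring

open Polynomial in
lemma charpoly_rhoMat (a b c d : ℝ) :
    (rhoMat a b c d).charpoly
      = (X - C (a:ℂ)) * (X - C (b:ℂ)) * (X - C (c:ℂ)) * (X - C (d:ℂ)) := by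
  rw [← Matrix.charpoly_reindex finProdFinEquiv, reindex_rhoMat, charpoly_M4]

/-- the Wootters concurrence of a Bell diagonal state with
decreasingly ordered eigenvalues λ₁ ≥ … ≥ λ₄ equals max[0, 2λ₁ − 1]. -/
theorem bellDiagonal_concurrence (lam : Fin 4 → ℝ)
    (hlam : Antitone lam) (hpos : ∀ i, 0 ≤ lam i) (hsum : ∑ i, lam i = 1)
    (ρ : Matrix (Fin 2 × Fin 2) (Fin 2 × Fin 2) ℂ)
    (hρ : ρ = ∑ i, (lam i : ℂ) • bellProj i) :
    ∀ l : Fin 4 → ℝ, Antitone l → (∀ i, 0 ≤ l i) →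
      (ρ * (pauli 1 ⊗ₖ pauli 1) * ρᵀ * (pauli 1 ⊗ₖ pauli 1)).charpoly
        = (∏ i : Fin 4, (Polynomial.X - Polynomial.C (l i : ℂ))) →
      max 0 (Real.sqrt (l 0) - Real.sqrt (l 1) - Real.sqrt (l 2) - Real.sqrt (l 3))
        = max 0 (2 * lam 0 - 1) := by
  intro l hl hlp hchar
  set Y := pauli 1 ⊗ₖ pauli 1 with hY
  set mu : Fin 4 → ℝ := fun i => lam i ^ 2 with hmu
  -- ρ is symmetric
  have hρT : ρᵀ = ρ := by
    rw [hρ, Matrix.transpose_sum]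
    exact Finset.sum_congr rfl fun i _ => by rw [Matrix.transpose_smul, projT]
  -- Y ρ Y = ρ
  have hYρY : Y * ρ * Y = ρ := by
    rw [hρ, Finset.mul_sum, Finset.sum_mul]
    exact Finset.sum_congr rfl fun i _ => by
      rw [mul_smul_comm, smul_mul_assoc, YPY]
  -- the R matrix
  have hR : ρ * Y * ρᵀ * Y = rhoMat (mu 0) (mu 1) (mu 2) (mu 3) := by
    have h1 : ρ * Y * ρᵀ * Y = ρ * (Y * ρ * Y) := by
      rw [hρT, Matrix.mul_assoc, Matrix.mul_assoc, Matrix.mul_assoc]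
    rw [h1, hYρY, hρ, Finset.sum_mul_sum]
    have h2 : ∀ i : Fin 4, ∑ j : Fin 4, ((lam i : ℂ) • bellProj i) * ((lam j : ℂ) • bellProj j)
        = ((mu i : ℝ) : ℂ) • bellProj i := by
      intro i
      have : ∀ j : Fin 4, ((lam i : ℂ) • bellProj i) * ((lam j : ℂ) • bellProj j)
          = ((lam i : ℂ) * (lam j : ℂ)) • (if i = j then bellProj i else 0) := by
        intro j
        rw [smul_mul_assoc, mul_smul_comm, PP, smul_smul]
      simp only [this, smul_ite, smul_zero]
      rw [Finset.sum_ite_eq Finset.univ i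
        (fun j => ((lam i : ℂ) * (lam j : ℂ)) • bellProj i)]
      simp only [Finset.mem_univ, if_true]
      have : ((mu i : ℝ) : ℂ) = (lam i : ℂ) * (lam i : ℂ) := by
        push_cast [hmu]; ring
      rw [this]
    rw [Finset.sum_congr rfl fun i _ => h2 i, rho_eq]
  -- use the characteristic polynomial hypothesis
  rw [hR, charpoly_rhoMat] at hchar
  have hmuanti : Antitone mu := fun i j h => pow_le_pow_left₀ (hpos j) (hlam h) 2
  have key : ∀ f : Fin 4 → ℝ,
      (∏ i : Fin 4, (Polynomial.X - Polynomial.C ((f i : ℝ) : ℂ))).roots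
        = Multiset.map (fun i => ((f i : ℝ) : ℂ)) Finset.univ.val := by
    intro f
    rw [Finset.prod_eq_multiset_prod]
    rw [show Multiset.map (fun i => Polynomial.X - Polynomial.C ((f i : ℝ) : ℂ)) Finset.univ.val
        = (Multiset.map (fun i => ((f i : ℝ) : ℂ)) Finset.univ.val).map
            (fun a => Polynomial.X - Polynomial.C a) from by rw [Multiset.map_map]; rfl]
    exact Polynomial.roots_multiset_prod_X_sub_C _
  have hchar' : (∏ i : Fin 4, (Polynomial.X - Polynomial.C ((l i : ℝ) : ℂ)))
      = ∏ i : Fin 4, (Polynomial.X - Polynomial.C ((mu i : ℝ) : ℂ)) := by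
    rw [show (∏ i : Fin 4, (Polynomial.X - Polynomial.C ((mu i : ℝ) : ℂ)))
        = (Polynomial.X - Polynomial.C ((mu 0 : ℝ) : ℂ)) *
          (Polynomial.X - Polynomial.C ((mu 1 : ℝ) : ℂ)) *
          (Polynomial.X - Polynomial.C ((mu 2 : ℝ) : ℂ)) *
          (Polynomial.X - Polynomial.C ((mu 3 : ℝ) : ℂ)) from Fin.prod_univ_four _]
    exact hchar.symm
  have hms : Multiset.map (fun i => ((l i : ℝ) : ℂ)) Finset.univ.val
      = Multiset.map (fun i => ((mu i : ℝ) : ℂ)) Finset.univ.val := by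
    rw [← key l, ← key mu, hchar']
  have hmsR : Multiset.map l Finset.univ.val = Multiset.map mu Finset.univ.val := by
    apply Multiset.map_injective (f := (Complex.ofReal : ℝ → ℂ)) Complex.ofReal_injective
    rw [Multiset.map_map, Multiset.map_map]
    exact hms
  have huniv : (Finset.univ.val : Multiset (Fin 4)) = ↑([0, 1, 2, 3] : List (Fin 4)) := by decide
  have hperm : List.Perm [l 0, l 1, l 2, l 3] [mu 0, mu 1, mu 2, mu 3] := by
    rw [← Multiset.coe_eq_coe]
    rw [huniv] at hmsR
    simpa using hmsR
  have hsorted : ∀ f : Fin 4 → ℝ, Antitone f → List.Pairwise (· ≥ ·) [f 0, f 1, f 2, f 3] := by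
    intro f hf
    simp only [List.pairwise_cons, List.mem_cons, List.mem_singleton, List.not_mem_nil,
      List.Pairwise.nil, and_true, ge_iff_le, List.pairwise_singleton, forall_eq_or_imp, forall_eq]
    exact ⟨⟨hf (by decide), hf (by decide), hf (by decide), fun a h => h.elim⟩,
      ⟨hf (by decide), hf (by decide), fun a h => h.elim⟩,
      ⟨hf (by decide), fun a h => h.elim⟩, fun b h => h.elim⟩
  have hlist : [l 0, l 1, l 2, l 3] = [mu 0, mu 1, mu 2, mu 3] :=
    List.Perm.eq_of_pairwise (fun a b _ _ h1 h2 => le_antisymm h2 h1) (hsorted l hl) (hsorted mu hmuanti) hperm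
  simp only [List.cons.injEq, and_true] at hlist
  obtain ⟨e0, e1, e2, e3⟩ := hlist
  have hs : ∀ i : Fin 4, Real.sqrt (mu i) = lam i := fun i => by
    rw [hmu]; exact Real.sqrt_sq (hpos i)
  rw [e0, e1, e2, e3, hs 0, hs 1, hs 2, hs 3]
  have hsum4 : lam 0 + lam 1 + lam 2 + lam 3 = 1 := by
    rw [Fin.sum_univ_four] at hsum; exact hsum
  have : lam 0 - lam 1 - lam 2 - lam 3 = 2 * lam 0 - 1 := by linarith
  rw [this]
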